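/- arXiv:1503.00289 — 4 statements merged into one kernel-verified Lean document; each statement's English description precedes it below -/
import Mathlib

section
/- Let V be a vector space over a field K equipped with an alternating bilinear form ⟨·,·⟩ (so ⟨x,x⟩ = 0 for all x ∈ V). Let W, L_a, L_b ⊆ V be isotropic subspaces (the form vanishes identically on each of them) such that V = L_a ⊕ W and V = L_b ⊕ W, and let τ_a, τ_b : V → V be the linear projections onto L_a and onto L_b along W. Then the bilinear form Q(h₁, h₂) := ⟨τ_a(h₁), τ_b(h₂)⟩ is symmetric: Q(h₁, h₂) = Q(h₂, h₁) for all h₁, h₂ ∈ V. -/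
/-! Expanding `B (τa h₁ - τb h₁) (τa h₂ - τb h₂) = 0` (both arguments lie in the isotropic `W`)
and discarding the terms killed by isotropy of `La` and `Lb` leaves
`B (τb h₁) (τa h₂) + B (τa h₁) (τb h₂) = 0`; antisymmetry of `B` turns this into the symmetry. -/

namespace LinearMap.IsAlt

variable {R M N : Type*} [CommRing R] [AddCommGroup M] [Module R M] [AddCommGroup N] [Module R N]
  {B : M →ₗ[R] M →ₗ[R] N}

theorem apply_eq_apply_of_apply_sub_sub_eq_zero (hB : B.IsAlt) {a₁ a₂ b₁ b₂ : M}
    (ha : B a₁ a₂ = 0) (hb : B b₁ b₂ = 0) (hab : B (a₁ - b₁) (a₂ - b₂) = 0) :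
    B a₁ b₂ = B a₂ b₁ := by
  rw [← hB.neg b₁ a₂]
  simp only [map_sub, LinearMap.sub_apply, ha, hb] at hab
  linear_combination (norm := module) -hab

end LinearMap.IsAlt

theorem period_form_symmetric_general {K V : Type*} [Field K] [AddCommGroup V] [Module K V]
    (B : V →ₗ[K] V →ₗ[K] K) (halt : ∀ x, B x x = 0)
    (W La Lb : Submodule K V)
    (hW : ∀ x ∈ W, ∀ y ∈ W, B x y = 0)
    (hLa : ∀ x ∈ La, ∀ y ∈ La, B x y = 0)
    (hLb : ∀ x ∈ Lb, ∀ y ∈ Lb, B x y = 0)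
    (τa τb : V →ₗ[K] V)
    (hτa : ∀ v, τa v ∈ La) (hτa' : ∀ v, v - τa v ∈ W)
    (hτb : ∀ v, τb v ∈ Lb) (hτb' : ∀ v, v - τb v ∈ W) :
    ∀ h₁ h₂ : V, B (τa h₁) (τb h₂) = B (τa h₂) (τb h₁) := by
  intro h₁ h₂
  have hdiff : ∀ v, τa v - τb v ∈ W := fun v => by simpa using W.sub_mem (hτb' v) (hτa' v)
  exact LinearMap.IsAlt.apply_eq_apply_of_apply_sub_sub_eq_zero halt
    (hLa _ (hτa h₁) _ (hτa h₂)) (hLb _ (hτb h₁) _ (hτb h₂)) (hW _ (hdiff h₁) _ (hdiff h₂))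

/-- **Symmetry of the period form `Q`.**
Let `V` be a vector space over a field `K` with an alternating bilinear form `B`.
Let `W`, `La`, `Lb` be isotropic subspaces with `V = La ⊕ W` and `V = Lb ⊕ W`,
and let `τa`, `τb` be the projections onto `La` and `Lb` along `W`.
Then `Q(h₁,h₂) = B (τa h₁) (τb h₂)` is symmetric. -/
theorem period_form_symmetric {K V : Type*} [Field K] [AddCommGroup V] [Module K V]
    (B : V →ₗ[K] V →ₗ[K] K) (halt : ∀ x, B x x = 0)
    (W La Lb : Submodule K V)
    (hW : ∀ x ∈ W, ∀ y ∈ W, B x y = 0)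
    (hLa : ∀ x ∈ La, ∀ y ∈ La, B x y = 0)
    (hLb : ∀ x ∈ Lb, ∀ y ∈ Lb, B x y = 0)
    (hcompa : IsCompl La W) (hcompb : IsCompl Lb W)
    (τa τb : V →ₗ[K] V)
    (hτa : ∀ v, τa v ∈ La) (hτa' : ∀ v, v - τa v ∈ W)
    (hτb : ∀ v, τb v ∈ Lb) (hτb' : ∀ v, v - τb v ∈ W) :
    ∀ h₁ h₂ : V, B (τa h₁) (τb h₂) = B (τa h₂) (τb h₁) :=
  period_form_symmetric_general B halt W La Lb hW hLa hLb τa τb hτa hτa' hτb hτb'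
end

section
/- Let V be a complex vector space equipped with an alternating ℂ-bilinear form ω and a conjugate-linear involution σ : V → V satisfying ω(σx, σy) = conj(ω(x,y)) for all x, y ∈ V. Let W ⊆ V be a subspace on which ω vanishes identically and such that i·ω(w, σw) is a strictly positive real number for every nonzero w ∈ W. Let L_a, L_b ⊆ V be σ-invariant subspaces on which ω vanishes identically, with L_a ∩ L_b = 0, V = L_a ⊕ W and V = L_b ⊕ W, and let τ_a, τ_b : V → V be the projections onto L_a and onto L_b along W. Then for every nonzero vector h ∈ V with σ(h) = h one has i·ω(τ_a h − τ_b h, σ(τ_a h − τ_b h)) = 2·Im(ω(τ_a h, σ(τ_b h))), and this quantity is strictly positive; in particular Im(ω(τ_a h, σ(τ_b h))) > 0. -/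
/-!
Put `a = τa h`, `b = τb h`. As `La`, `Lb` are `σ`-stable and isotropic, `ω a (σ a)` and
`ω b (σ b)` vanish, so `ω (a - b) (σ (a - b)) = conj z - z` with `z = ω a (σ b)`, and
`i (conj z - z) = 2 Im z`. Now `a - b = (h - b) - (h - a)` lies in `W`, and it is nonzero:
otherwise `a ∈ La ⊓ Lb = ⊥`, so `h ∈ W`, while `ω h (σ h) = ω h h = 0`. Positivity of
`i ω(w, σ w)` on `W \ {0}` concludes.
-/

open Complex ComplexConjugate

section PeriodForm

variable {V : Type*} [AddCommGroup V] [Module ℂ V] {ω : V →ₗ[ℂ] V →ₗ[ℂ] ℂ}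

theorem LinearMap.IsAlt.apply_map_swap_eq_neg_conj (hω : ω.IsAlt) {σ : V → V}
    (hσinv : Function.Involutive σ) (hσω : ∀ x y, ω (σ x) (σ y) = conj (ω x y)) (a b : V) :
    ω b (σ a) = -conj (ω a (σ b)) := by
  rw [← hσω, hσinv, hω.neg]

theorem LinearMap.IsAlt.I_mul_apply_sub_map_sub (hω : ω.IsAlt) {σ : V →+ V}
    (hσinv : Function.Involutive σ) (hσω : ∀ x y, ω (σ x) (σ y) = conj (ω x y)) {a b : V}
    (ha : ω a (σ a) = 0) (hb : ω b (σ b) = 0) :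
    I * ω (a - b) (σ (a - b)) = ((2 * (ω a (σ b)).im : ℝ) : ℂ) := by
  rw [map_sub σ, map_sub, map_sub, LinearMap.sub_apply, LinearMap.sub_apply, ha, hb,
    hω.apply_map_swap_eq_neg_conj hσinv hσω]
  have hconj := sub_conj (ω a (σ b))
  push_cast at hconj ⊢
  linear_combination (-I) * hconj - 2 * (ω a (σ b)).im * I_sq

theorem eq_zero_of_mem_of_apply_map_eq_zero {σ : V → V} {W : Submodule ℂ V}
    (hWpos : ∀ w ∈ W, w ≠ 0 → ∃ r : ℝ, 0 < r ∧ I * ω w (σ w) = (r : ℂ)) {w : V} (hw : w ∈ W)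
    (h0 : ω w (σ w) = 0) : w = 0 := by
  by_contra hne
  obtain ⟨r, hr, hre⟩ := hWpos w hw hne
  rw [h0, mul_zero] at hre
  exact hr.ne (by exact_mod_cast hre)

end PeriodForm

theorem Submodule.ne_of_mem_of_sub_mem_of_notMem {R M : Type*} [Ring R] [AddCommGroup M]
    [Module R M] {W La Lb : Submodule R M} (hab : La ⊓ Lb = ⊥) {h a b : M} (ha : a ∈ La)
    (hb : b ∈ Lb) (haW : h - a ∈ W) (hW : h ∉ W) : a ≠ b := by
  rintro rfl
  have ha0 : a = 0 := by simpa [hab] using Submodule.mem_inf.mpr ⟨ha, hb⟩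
  exact hW (by simpa [ha0] using haW)

theorem period_form_positive_general {V : Type*} [AddCommGroup V] [Module ℂ V]
    (ω : V →ₗ[ℂ] V →ₗ[ℂ] ℂ) (halt : ∀ x, ω x x = 0)
    (σ : V → V)
    (hσadd : ∀ x y, σ (x + y) = σ x + σ y)
    (hσinv : ∀ v, σ (σ v) = v)
    (hσω : ∀ x y, ω (σ x) (σ y) = (starRingEnd ℂ) (ω x y))
    (W La Lb : Submodule ℂ V)
    (hWpos : ∀ w ∈ W, w ≠ 0 → ∃ r : ℝ, 0 < r ∧ Complex.I * ω w (σ w) = (r : ℂ))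
    (hLaσ : ∀ x ∈ La, σ x ∈ La) (hLbσ : ∀ x ∈ Lb, σ x ∈ Lb)
    (hLa : ∀ x ∈ La, ∀ y ∈ La, ω x y = 0)
    (hLb : ∀ x ∈ Lb, ∀ y ∈ Lb, ω x y = 0)
    (hab : La ⊓ Lb = ⊥)
    (τa τb : V →ₗ[ℂ] V)
    (hτa : ∀ v, τa v ∈ La) (hτa' : ∀ v, v - τa v ∈ W)
    (hτb : ∀ v, τb v ∈ Lb) (hτb' : ∀ v, v - τb v ∈ W) :
    ∀ h : V, h ≠ 0 → σ h = h →
      Complex.I * ω (τa h - τb h) (σ (τa h - τb h))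
          = ((2 * (ω (τa h) (σ (τb h))).im : ℝ) : ℂ)
        ∧ 0 < (ω (τa h) (σ (τb h))).im := by
  intro h hh hσh
  have hhW : h ∉ W := fun hW ↦
    hh (eq_zero_of_mem_of_apply_map_eq_zero hWpos hW (by rw [hσh]; exact halt h))
  have hdiff_mem : τa h - τb h ∈ W := by simpa using W.sub_mem (hτb' h) (hτa' h)
  have hdiff_ne : τa h - τb h ≠ 0 :=
    sub_ne_zero.mpr (Submodule.ne_of_mem_of_sub_mem_of_notMem hab (hτa h) (hτb h) (hτa' h) hhW)
  have hid := LinearMap.IsAlt.I_mul_apply_sub_map_sub (σ := AddMonoidHom.mk' σ hσadd) halt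
    hσinv hσω (hLa _ (hτa h) _ (hLaσ _ (hτa h))) (hLb _ (hτb h) _ (hLbσ _ (hτb h)))
  obtain ⟨r, hr, hre⟩ := hWpos _ hdiff_mem hdiff_ne
  have him : 2 * (ω (τa h) (σ (τb h))).im = r := by exact_mod_cast hid.symm.trans hre
  exact ⟨hid, by linarith⟩

/-- **Positivity of the imaginary part of the period form.**
`V` is a complex vector space with an alternating bilinear form `ω` and a
conjugate-linear involution `σ` compatible with `ω`.  `W` is an isotropic
subspace on which `i·ω(w, σw) > 0` for `w ≠ 0`, and `La`, `Lb` are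
σ-invariant isotropic subspaces with `La ∩ Lb = 0`, `V = La ⊕ W`,
`V = Lb ⊕ W`, with projections `τa`, `τb` onto `La`, `Lb` along `W`.
Then for every nonzero `h` fixed by `σ`,
`i·ω(τa h − τb h, σ(τa h − τb h)) = 2·Im(ω(τa h, σ(τb h)))` and this is
strictly positive. -/
theorem period_form_positive {V : Type*} [AddCommGroup V] [Module ℂ V]
    (ω : V →ₗ[ℂ] V →ₗ[ℂ] ℂ) (halt : ∀ x, ω x x = 0)
    (σ : V → V)
    (hσadd : ∀ x y, σ (x + y) = σ x + σ y)
    (hσsmul : ∀ (c : ℂ) (v : V), σ (c • v) = (starRingEnd ℂ) c • σ v)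
    (hσinv : ∀ v, σ (σ v) = v)
    (hσω : ∀ x y, ω (σ x) (σ y) = (starRingEnd ℂ) (ω x y))
    (W La Lb : Submodule ℂ V)
    (hW : ∀ x ∈ W, ∀ y ∈ W, ω x y = 0)
    (hWpos : ∀ w ∈ W, w ≠ 0 → ∃ r : ℝ, 0 < r ∧ Complex.I * ω w (σ w) = (r : ℂ))
    (hLaσ : ∀ x ∈ La, σ x ∈ La) (hLbσ : ∀ x ∈ Lb, σ x ∈ Lb)
    (hLa : ∀ x ∈ La, ∀ y ∈ La, ω x y = 0)
    (hLb : ∀ x ∈ Lb, ∀ y ∈ Lb, ω x y = 0)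
    (hab : La ⊓ Lb = ⊥)
    (hcompa : IsCompl La W) (hcompb : IsCompl Lb W)
    (τa τb : V →ₗ[ℂ] V)
    (hτa : ∀ v, τa v ∈ La) (hτa' : ∀ v, v - τa v ∈ W)
    (hτb : ∀ v, τb v ∈ Lb) (hτb' : ∀ v, v - τb v ∈ W) :
    ∀ h : V, h ≠ 0 → σ h = h →
      Complex.I * ω (τa h - τb h) (σ (τa h - τb h))
          = ((2 * (ω (τa h) (σ (τb h))).im : ℝ) : ℂ)
        ∧ 0 < (ω (τa h) (σ (τb h))).im :=
  period_form_positive_general ω halt σ hσadd hσinv hσω W La Lb hWpos hLaσ hLbσ hLa hLb hab τa τb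
    hτa hτa' hτb hτb'
end

section
/- Fix τ ∈ ℂ with Im τ > 0, and let θ₁₁(z) = ∑_{n ∈ ℤ} exp(πiτ(n+1/2)² + 2πi(n+1/2)(z+1/2)). Let n ≥ 1 be an integer, let α : ℤ/nℤ → ℂ be any function, and let t, z ∈ ℂ. Then ∑_{k ∈ ℤ/nℤ} [ θ₁₁(t + z − α_k − α_{k+1}) · θ₁₁(α_k − α_{k+1}) · ∏_{l ∈ ℤ/nℤ, l ∉ {k, k+1}} θ₁₁(t − α_l)·θ₁₁(z − α_l) ] = 0. -/
/-!
Write `A(x, y) = θ(t + z - x - y) θ(x - y)` and `B(x) = θ(t - x) θ(z - x)`. The case `n = 3` is the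
three-term relation `A(x, y) B(w) + A(y, w) B(x) + A(w, x) B(y) = 0`, which is Weierstrass's
addition formula for `θ₁₁` after the substitution `x ↦ (t + z) / 2 - x`. The addition formula
follows by expanding each product `θ(x + y) θ(x - y)` as a lattice sum over the `(p, q) ∈ ℤ²` with
`p + q` odd: the three products of two such sums become sums over `ℤ⁴` with the same exponentials,
and their coefficients cancel by a parity check. For general `n`, put
`D(j) = A(α₀, α_j) ∏_{l ≠ 0, j} B(α_l)`; the three-term relation says that the `k`-th summand is
`D(k + 1) - D(k)`, so the sum telescopes around the cycle.
-/

open Complex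

/-- The Jacobi theta function with characteristic `(1,1)` for the modulus `τ`:
`θ₁₁(z) = ∑_{n ∈ ℤ} exp(πiτ(n+1/2)² + 2πi(n+1/2)(z+1/2))`. -/
noncomputable def theta11 (τ z : ℂ) : ℂ :=
  ∑' n : ℤ,
    Complex.exp ((Real.pi : ℂ) * Complex.I * τ * ((n : ℂ) + 1 / 2) ^ 2
      + 2 * (Real.pi : ℂ) * Complex.I * ((n : ℂ) + 1 / 2) * (z + 1 / 2))

open Finset

section CyclicTelescoping

variable {ι R : Type*} [Fintype ι] [DecidableEq ι] [CommRing R]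

theorem prod_filter_ne_ne_eq_mul (B : ι → R) {a i j : ι} (hi : a ≠ i) (hj : a ≠ j) :
    ∏ l ∈ univ.filter (fun l => l ≠ i ∧ l ≠ j), B l =
      B a * ∏ l ∈ univ.filter (fun l => l ∉ ({a, i, j} : Finset ι)), B l := by
  rw [← mul_prod_erase _ _ (by simp [hi, hj] : a ∈ univ.filter (fun l => l ≠ i ∧ l ≠ j))]
  congr 2
  ext l
  simp only [mem_erase, mem_filter, mem_univ, true_and, mem_insert, mem_singleton]
  tauto

theorem sum_perm_mul_prod_filter_ne_eq_zero (σ : Equiv.Perm ι) (A : ι → ι → R) (B : ι → R)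
    (hA : ∀ i j, A j i = -A i j) (hA₀ : ∀ i, A i i = 0)
    (h₃ : ∀ i j k, A i j * B k + A j k * B i + A k i * B j = 0) :
    ∑ k, A k (σ k) * ∏ l ∈ univ.filter (fun l => l ≠ k ∧ l ≠ σ k), B l = 0 := by
  rcases isEmpty_or_nonempty ι with _ | ⟨⟨o⟩⟩
  · exact Fintype.sum_empty _
  set D : ι → R := fun j => A o j * ∏ l ∈ univ.filter (fun l => l ≠ o ∧ l ≠ j), B l with hD
  have hDo : D o = 0 := by simp only [hD, hA₀, zero_mul]
  suffices h : ∀ k, A k (σ k) * ∏ l ∈ univ.filter (fun l => l ≠ k ∧ l ≠ σ k), B l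
      = D (σ k) - D k by
    rw [Fintype.sum_congr _ _ h, sum_sub_distrib, Equiv.sum_comp σ D, sub_self]
  intro k
  by_cases hk : k = o
  · rw [hk, hDo, sub_zero]
  by_cases hσk : σ k = o
  · rw [hσk, hDo, zero_sub, hA o k, neg_mul]
    simp only [hD, and_comm]
  by_cases hfix : σ k = k
  · rw [hfix, hA₀, zero_mul, sub_self]
  simp only [hD]
  rw [prod_filter_ne_ne_eq_mul B (Ne.symm hk) (Ne.symm hσk),
    prod_filter_ne_ne_eq_mul B hk (Ne.symm hfix), prod_filter_ne_ne_eq_mul B hσk hfix,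
    insert_comm k o, insert_comm (σ k) o, pair_comm (σ k) k]
  linear_combination (∏ l ∈ univ.filter (fun l => l ∉ ({o, k, σ k} : Finset ι)), B l) *
    (h₃ k (σ k) o - hA o (σ k) * B k)

end CyclicTelescoping

open Real

namespace Theta11

noncomputable def term (τ : ℂ) (n : ℤ) (z : ℂ) : ℂ :=
  cexp (π * I * τ * ((n : ℂ) + 1 / 2) ^ 2 + 2 * π * I * ((n : ℂ) + 1 / 2) * (z + 1 / 2))

theorem _root_.theta11_eq_tsum (τ z : ℂ) : theta11 τ z = ∑' n : ℤ, term τ n z := rfl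

theorem term_eq_mul_jacobiTheta₂_term (τ : ℂ) (n : ℤ) (z : ℂ) :
    term τ n z = cexp (π * I * τ / 4 + π * I * (z + 1 / 2)) *
      jacobiTheta₂_term n (z + 1 / 2 + τ / 2) τ := by
  rw [term, jacobiTheta₂_term, ← Complex.exp_add]
  ring_nf

theorem summable_norm_term {τ : ℂ} (hτ : 0 < τ.im) (z : ℂ) :
    Summable fun n : ℤ => ‖term τ n z‖ := by
  simp_rw [term_eq_mul_jacobiTheta₂_term, norm_mul]
  exact (summable_norm_iff.mpr ((summable_jacobiTheta₂_term_iff _ τ).mpr hτ)).mul_left _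

theorem hasSum_term {τ : ℂ} (hτ : 0 < τ.im) (z : ℂ) :
    HasSum (fun n : ℤ => term τ n z) (theta11 τ z) :=
  (summable_norm_term hτ z).of_norm.hasSum

theorem term_neg_one_sub (τ : ℂ) (n : ℤ) (z : ℂ) : term τ (-1 - n) (-z) = -term τ n z := by
  conv_rhs => rw [← neg_one_mul, ← exp_pi_mul_I, term, ← Complex.exp_add]
  rw [term, Complex.exp_eq_exp_iff_exists_int]
  exact ⟨-n - 1, by push_cast; ring⟩

theorem _root_.theta11_neg (τ z : ℂ) : theta11 τ (-z) = -theta11 τ z := by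
  rw [theta11_eq_tsum, theta11_eq_tsum, ← tsum_neg, ← (Equiv.subLeft (-1 : ℤ)).tsum_eq]
  exact tsum_congr fun n => term_neg_one_sub τ n z

theorem _root_.theta11_zero (τ : ℂ) : theta11 τ 0 = 0 := by
  simpa [CharZero.eq_neg_self_iff] using theta11_neg τ 0

def paritySign (p q : ZMod 2) : ℤ := if p + q = 1 then (if p = 0 then 1 else -1) else 0

theorem paritySign_cycle (a b c d : ZMod 2) :
    paritySign b a * paritySign c d + paritySign c b * paritySign a d +
      paritySign a c * paritySign b d = 0 := by
  revert a b c d; decide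

theorem intCast_ite_eq_cexp (p : ℤ) :
    ((if (p : ZMod 2) = 0 then 1 else -1 : ℤ) : ℂ) = cexp (p * (π * I)) := by
  rw [exp_int_mul, exp_pi_mul_I]
  split_ifs with hp
  · rw [(ZMod.intCast_eq_zero_iff_even.mp hp).neg_one_zpow, Int.cast_one]
  · rw [(Int.not_even_iff_odd.mp (mt ZMod.intCast_eq_zero_iff_even.mpr hp)).neg_one_zpow,
      Int.cast_neg, Int.cast_one]

/-- The `(p, q)` coefficient of `θ(x + y) θ(x - y)` as a lattice sum: the `(m, n)` term of the
product of the two series is `pairTerm τ x y (m + n + 1, m - n)`, and `paritySign p q` is `(-1)^p`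
for `p + q` odd and `0` otherwise. -/
noncomputable def pairTerm (τ x y : ℂ) (pq : ℤ × ℤ) : ℂ :=
  paritySign pq.1 pq.2 * (jacobiTheta₂_term pq.1 x (τ / 2) * jacobiTheta₂_term pq.2 y (τ / 2))

def pairIndex (mn : ℤ × ℤ) : ℤ × ℤ := (mn.1 + mn.2 + 1, mn.1 - mn.2)

theorem pairIndex_injective : Function.Injective pairIndex := by
  intro a b h
  simp only [pairIndex, Prod.ext_iff] at h ⊢
  omega

theorem term_mul_term (τ x y : ℂ) (m n : ℤ) :
    term τ m (x + y) * term τ n (x - y) = pairTerm τ x y (pairIndex (m, n)) := by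
  have hodd : ((m + n + 1 : ℤ) : ZMod 2) + ((m - n : ℤ) : ZMod 2) = 1 := by
    rw [← Int.cast_add, ZMod.intCast_eq_one_iff_odd]
    exact ⟨m, by ring⟩
  rw [pairTerm, pairIndex, paritySign, if_pos hodd, intCast_ite_eq_cexp, term, term,
    jacobiTheta₂_term, jacobiTheta₂_term, ← Complex.exp_add, ← Complex.exp_add, ← Complex.exp_add]
  congr 1
  push_cast
  ring

theorem pairTerm_eq_zero_of_notMem_range {τ x y : ℂ} {pq : ℤ × ℤ}
    (h : pq ∉ Set.range pairIndex) : pairTerm τ x y pq = 0 := by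
  rw [pairTerm, paritySign, if_neg, Int.cast_zero, zero_mul]
  rw [← Int.cast_add, ZMod.intCast_eq_one_iff_odd]
  rintro ⟨k, hk⟩
  exact h ⟨(k, pq.1 - 1 - k), by simp only [pairIndex, Prod.ext_iff]; omega⟩

theorem hasSum_term_mul_term {τ : ℂ} (hτ : 0 < τ.im) (z w : ℂ) :
    HasSum (fun mn : ℤ × ℤ => term τ mn.1 z * term τ mn.2 w) (theta11 τ z * theta11 τ w) := by
  -- Elaborated against the goal, `HasSum.mul` gets stuck unfolding the instance diamond for `*`
  -- on `ℂ`; elaborated on its own, its type is accepted at once.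
  have hsummable :=
    summable_mul_of_summable_norm (summable_norm_term hτ z) (summable_norm_term hτ w)
  have h := (hasSum_term hτ z).mul (hasSum_term hτ w) hsummable
  exact h

theorem hasSum_pairTerm {τ : ℂ} (hτ : 0 < τ.im) (x y : ℂ) :
    HasSum (pairTerm τ x y) (theta11 τ (x + y) * theta11 τ (x - y)) := by
  refine (pairIndex_injective.hasSum_iff (f := pairTerm τ x y)
    fun _ h => pairTerm_eq_zero_of_notMem_range h).mp ?_
  have hcomp : pairTerm τ x y ∘ pairIndex =
      fun mn : ℤ × ℤ => term τ mn.1 (x + y) * term τ mn.2 (x - y) :=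
    funext fun mn => (term_mul_term τ x y mn.1 mn.2).symm
  rw [hcomp]
  exact hasSum_term_mul_term hτ (x + y) (x - y)

theorem summable_norm_pairTerm {τ : ℂ} (hτ : 0 < τ.im) (x y : ℂ) :
    Summable fun pq => ‖pairTerm τ x y pq‖ := by
  refine (pairIndex_injective.summable_iff fun _ h => ?_).mp ?_
  · rw [pairTerm_eq_zero_of_notMem_range h, norm_zero]
  · have hprod := (summable_norm_term hτ (x + y)).mul_norm (summable_norm_term hτ (x - y))
    have hcomp : (fun mn : ℤ × ℤ => ‖term τ mn.1 (x + y) * term τ mn.2 (x - y)‖) =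
        (fun pq => ‖pairTerm τ x y pq‖) ∘ pairIndex :=
      funext fun mn => congrArg norm (term_mul_term τ x y mn.1 mn.2)
    rw [hcomp] at hprod
    exact hprod

theorem hasSum_pairTerm_mul_pairTerm {τ : ℂ} (hτ : 0 < τ.im) (x y x' y' : ℂ) :
    HasSum (fun u : (ℤ × ℤ) × (ℤ × ℤ) => pairTerm τ x y u.1 * pairTerm τ x' y' u.2)
      (theta11 τ (x + y) * theta11 τ (x - y) * (theta11 τ (x' + y') * theta11 τ (x' - y'))) :=
  have h := (hasSum_pairTerm hτ x y).mul (hasSum_pairTerm hτ x' y') <|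
    summable_mul_of_summable_norm (summable_norm_pairTerm hτ x y) (summable_norm_pairTerm hτ x' y')
  h

theorem pairTerm_cycle (τ A B C D : ℂ) (a b c d : ℤ) :
    pairTerm τ B A (b, a) * pairTerm τ C D (c, d) + pairTerm τ C B (c, b) * pairTerm τ A D (a, d) +
      pairTerm τ A C (a, c) * pairTerm τ B D (b, d) = 0 := by
  have h := congrArg (Int.cast : ℤ → ℂ) (paritySign_cycle a b c d)
  push_cast at h
  simp only [pairTerm]
  linear_combination (jacobiTheta₂_term a A (τ / 2) * jacobiTheta₂_term b B (τ / 2) *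
    jacobiTheta₂_term c C (τ / 2) * jacobiTheta₂_term d D (τ / 2)) * h

theorem _root_.theta11_weierstrass {τ : ℂ} (hτ : 0 < τ.im) (A B C D : ℂ) :
    theta11 τ (B + A) * theta11 τ (B - A) * (theta11 τ (C + D) * theta11 τ (C - D)) +
      theta11 τ (C + B) * theta11 τ (C - B) * (theta11 τ (A + D) * theta11 τ (A - D)) +
      theta11 τ (A + C) * theta11 τ (A - C) * (theta11 τ (B + D) * theta11 τ (B - D)) = 0 := by
  -- Index all three sums by `((a, b), (c, d))`, the term of exponent `2πi(aA + bB + cC + dD)`.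
  let e₁ : (ℤ × ℤ) × (ℤ × ℤ) ≃ (ℤ × ℤ) × (ℤ × ℤ) := (Equiv.prodComm ℤ ℤ).prodCongr (Equiv.refl _)
  let e₂ : (ℤ × ℤ) × (ℤ × ℤ) ≃ (ℤ × ℤ) × (ℤ × ℤ) :=
    ⟨fun u => ((u.2.1, u.1.2), (u.1.1, u.2.2)), fun u => ((u.2.1, u.1.2), (u.1.1, u.2.2)),
      fun _ => rfl, fun _ => rfl⟩
  let e₃ := Equiv.prodProdProdComm ℤ ℤ ℤ ℤ
  have h := ((e₁.hasSum_iff.mpr (hasSum_pairTerm_mul_pairTerm hτ B A C D)).add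
    (e₂.hasSum_iff.mpr (hasSum_pairTerm_mul_pairTerm hτ C B A D))).add
    (e₃.hasSum_iff.mpr (hasSum_pairTerm_mul_pairTerm hτ A C B D))
  refine h.unique ?_
  convert hasSum_zero with u
  exact pairTerm_cycle τ A B C D u.1.1 u.1.2 u.2.1 u.2.2

end Theta11

theorem theta11_three_term {τ : ℂ} (hτ : 0 < τ.im) (t z x y w : ℂ) :
    theta11 τ (t + z - x - y) * theta11 τ (x - y) * (theta11 τ (t - w) * theta11 τ (z - w)) +
      theta11 τ (t + z - y - w) * theta11 τ (y - w) * (theta11 τ (t - x) * theta11 τ (z - x)) +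
      theta11 τ (t + z - w - x) * theta11 τ (w - x) * (theta11 τ (t - y) * theta11 τ (z - y)) =
      0 := by
  have h := theta11_weierstrass hτ ((t + z) / 2 - x) ((t + z) / 2 - y) ((t + z) / 2 - w)
    ((t - z) / 2)
  ring_nf at h ⊢
  exact h

/-- **Generalized Fay trisecant identity** (denominator-cleared form) on a genus
one curve `ℂ/(ℤ + τℤ)`: for any `n ≥ 1`, any `α : ℤ/nℤ → ℂ` and any `t, z ∈ ℂ`,
`∑_k θ₁₁(t+z−α_k−α_{k+1}) θ₁₁(α_k−α_{k+1}) ∏_{l ∉ {k,k+1}} θ₁₁(t−α_l) θ₁₁(z−α_l) = 0`. -/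
theorem generalized_fay_trisecant (τ : ℂ) (hτ : 0 < τ.im)
    (n : ℕ) [NeZero n] (α : ZMod n → ℂ) (t z : ℂ) :
    ∑ k : ZMod n,
      theta11 τ (t + z - α k - α (k + 1)) * theta11 τ (α k - α (k + 1)) *
        ∏ l ∈ Finset.univ.filter (fun l : ZMod n => l ≠ k ∧ l ≠ k + 1),
          (theta11 τ (t - α l) * theta11 τ (z - α l)) = 0 := by
  refine sum_perm_mul_prod_filter_ne_eq_zero (Equiv.addRight 1)
    (fun i j => theta11 τ (t + z - α i - α j) * theta11 τ (α i - α j))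
    (fun l => theta11 τ (t - α l) * theta11 τ (z - α l)) (fun i j => ?_) (fun i => ?_)
    (fun i j k => theta11_three_term hτ t z (α i) (α j) (α k))
  · rw [← neg_sub (α i) (α j), theta11_neg, sub_right_comm (t + z), mul_neg]
  · rw [sub_self, theta11_zero, mul_zero]
end

section
/- Fix τ ∈ ℂ with Im τ > 0, and let θ₁₁(z) = ∑_{n ∈ ℤ} exp(πiτ(n+1/2)² + 2πi(n+1/2)(z+1/2)). Then for all a, b, c, d, t ∈ ℂ: θ₁₁(b+c−t)·θ₁₁(b−c)·θ₁₁(d+a−t)·θ₁₁(d−a) + θ₁₁(c+a−t)·θ₁₁(c−a)·θ₁₁(d+b−t)·θ₁₁(d−b) + θ₁₁(a+b−t)·θ₁₁(a−b)·θ₁₁(d+c−t)·θ₁₁(d−c) = 0. Equivalently, setting F_t(u,v) = θ₁₁(u+v−t)·θ₁₁(u−v), one has F_t(b,c)F_t(d,a) + F_t(c,a)F_t(d,b) + F_t(a,b)F_t(d,c) = 0. -/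
open Complex

/-!
Riemann's addition formula for theta functions with characteristics: grouping the pairs `(n, m)`
in `θ[α](x + y | τ) θ[α](x - y | τ)` by the parity of `n + m` and writing
`n + α = u + v`, `m + α = u - v` turns the product into
`θ[α](2x | 2τ) θ[0](2y | 2τ) + θ[α + 1/2](2x | 2τ) θ[1/2](2y | 2τ)`.
For `α = 1/2`, translating `x` by `1/2` turns this into
`θ₁₁(x + y) θ₁₁(x - y) = P(x) Q(y) - Q(x) P(y)`,
where `P = θ[0](2· | 2τ)` and `Q = θ[1/2](2· | 2τ)`.
After the shift `u ↦ u - t/2`, the three terms of the identity are therefore products of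
`2 × 2` minors of the `2 × 4` matrix with rows `P`, `Q` evaluated at `a, b, c, d`,
and the identity is the Plücker relation among these minors.
-/

open scoped Real

noncomputable def thetaCharTerm (α τ z : ℂ) (n : ℤ) : ℂ :=
  cexp (π * I * τ * ((n : ℂ) + α) ^ 2 + 2 * π * I * ((n : ℂ) + α) * z)

/-- The theta function `θ[α](z | τ)` with characteristic `(α, 0)`. -/
noncomputable def thetaChar (α τ z : ℂ) : ℂ :=
  ∑' n : ℤ, thetaCharTerm α τ z n

theorem theta11_eq_thetaChar (τ z : ℂ) : theta11 τ z = thetaChar (1 / 2) τ (z + 1 / 2) := rfl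

theorem thetaCharTerm_eq_mul_jacobiTheta₂_term (α τ z : ℂ) (n : ℤ) :
    thetaCharTerm α τ z n =
      cexp (π * I * τ * α ^ 2 + 2 * π * I * α * z) *
        jacobiTheta₂_term n (z + α * τ) τ := by
  rw [thetaCharTerm, jacobiTheta₂_term, ← exp_add]
  ring_nf

theorem summable_norm_thetaCharTerm {τ : ℂ} (hτ : 0 < τ.im) (α z : ℂ) :
    Summable fun n => ‖thetaCharTerm α τ z n‖ := by
  rw [summable_norm_iff, funext (thetaCharTerm_eq_mul_jacobiTheta₂_term α τ z)]
  exact ((summable_jacobiTheta₂_term_iff _ τ).mpr hτ).mul_left _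

theorem thetaChar_add_one (α τ z : ℂ) :
    thetaChar α τ (z + 1) = cexp (2 * π * I * α) * thetaChar α τ z := by
  rw [thetaChar, thetaChar, ← tsum_mul_left]
  congr 1 with n
  have h : thetaCharTerm α τ (z + 1) n =
      cexp (n * (2 * π * I)) * (cexp (2 * π * I * α) * thetaCharTerm α τ z n) := by
    rw [thetaCharTerm, thetaCharTerm, ← exp_add, ← exp_add]
    congr 1
    ring
  rw [h, exp_int_mul_two_pi_mul_I, one_mul]

theorem thetaChar_char_add_one (α τ z : ℂ) : thetaChar (α + 1) τ z = thetaChar α τ z := by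
  rw [thetaChar, thetaChar, ← (Equiv.addRight (1 : ℤ)).tsum_eq (thetaCharTerm α τ z)]
  congr 1 with n
  simp only [thetaCharTerm, Equiv.coe_addRight, Int.cast_add, Int.cast_one, add_assoc,
    add_comm (1 : ℂ) α]

def parityEquiv : (ℤ × ℤ) ⊕ (ℤ × ℤ) ≃ ℤ × ℤ where
  toFun
    | .inl p => (p.1 + p.2, p.1 - p.2)
    | .inr p => (p.1 + p.2 + 1, p.1 - p.2)
  invFun p :=
    if (p.1 + p.2) % 2 = 0 then .inl ((p.1 + p.2) / 2, (p.1 - p.2) / 2)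
    else .inr ((p.1 + p.2 - 1) / 2, (p.1 - p.2 - 1) / 2)
  left_inv := by
    rintro (⟨k, l⟩ | ⟨k, l⟩)
    · dsimp only
      rw [if_pos (by omega)]
      congr 2 <;> omega
    · dsimp only
      rw [if_neg (by omega)]
      congr 2 <;> omega
  right_inv := by
    rintro ⟨n, m⟩
    dsimp only
    split_ifs <;> ext <;> dsimp only <;> omega

theorem HasSum.of_parity {E : Type*} [AddCommMonoid E] [TopologicalSpace E] [ContinuousAdd E]
    {f : ℤ × ℤ → E} {a b : E}
    (heven : HasSum (fun p : ℤ × ℤ => f (p.1 + p.2, p.1 - p.2)) a)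
    (hodd : HasSum (fun p : ℤ × ℤ => f (p.1 + p.2 + 1, p.1 - p.2)) b) : HasSum f (a + b) :=
  parityEquiv.hasSum_iff.mp (heven.sum hodd)

theorem thetaCharTerm_mul_thetaCharTerm {α β γ τ x y : ℂ} {n m k l : ℤ}
    (hn : (n : ℂ) + α = (k + β) + (l + γ)) (hm : (m : ℂ) + α = (k + β) - (l + γ)) :
    thetaCharTerm α τ (x + y) n * thetaCharTerm α τ (x - y) m =
      thetaCharTerm β (2 * τ) (2 * x) k * thetaCharTerm γ (2 * τ) (2 * y) l := by
  simp only [thetaCharTerm, ← exp_add, hn, hm]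
  ring_nf

theorem hasSum_thetaCharTerm_mul {τ τ' : ℂ} (hτ : 0 < τ.im) (hτ' : 0 < τ'.im)
    (α β z w : ℂ) :
    HasSum (fun p : ℤ × ℤ => thetaCharTerm α τ z p.1 * thetaCharTerm β τ' w p.2)
      (thetaChar α τ z * thetaChar β τ' w) :=
  (summable_norm_thetaCharTerm hτ α z).of_norm.hasSum.mul
    (summable_norm_thetaCharTerm hτ' β w).of_norm.hasSum
    (summable_mul_of_summable_norm (summable_norm_thetaCharTerm hτ α z)
      (summable_norm_thetaCharTerm hτ' β w))

theorem thetaChar_add_mul_thetaChar_sub {τ : ℂ} (hτ : 0 < τ.im) (α x y : ℂ) :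
    thetaChar α τ (x + y) * thetaChar α τ (x - y) =
      thetaChar α (2 * τ) (2 * x) * thetaChar 0 (2 * τ) (2 * y)
        + thetaChar (α + 1 / 2) (2 * τ) (2 * x) * thetaChar (1 / 2) (2 * τ) (2 * y) := by
  have h2τ : 0 < (2 * τ).im := by simpa using hτ
  refine ((hasSum_thetaCharTerm_mul hτ hτ α α (x + y) (x - y)).unique ?_)
  refine HasSum.of_parity ?_ ?_
  · refine (hasSum_thetaCharTerm_mul h2τ h2τ α 0 (2 * x) (2 * y)).congr_fun fun p => ?_
    exact thetaCharTerm_mul_thetaCharTerm (by push_cast; ring) (by push_cast; ring)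
  · refine (hasSum_thetaCharTerm_mul h2τ h2τ (α + 1 / 2) (1 / 2) (2 * x) (2 * y)).congr_fun
      fun p => ?_
    exact thetaCharTerm_mul_thetaCharTerm (by push_cast; ring) (by push_cast; ring)

def minor2 {ι R : Type*} [CommRing R] (f g : ι → R) (i j : ι) : R :=
  f i * g j - g i * f j

theorem minor2_pluecker {ι R : Type*} [CommRing R] (f g : ι → R) (a b c d : ι) :
    minor2 f g b c * minor2 f g d a + minor2 f g c a * minor2 f g d b
      + minor2 f g a b * minor2 f g d c = 0 := by
  simp only [minor2]
  ring

theorem theta11_add_mul_theta11_sub {τ : ℂ} (hτ : 0 < τ.im) (x y : ℂ) :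
    theta11 τ (x + y) * theta11 τ (x - y) =
      minor2 (fun u => thetaChar 0 (2 * τ) (2 * u)) (fun u => thetaChar (1 / 2) (2 * τ) (2 * u))
        x y := by
  have hx : 2 * (x + 1 / 2) = 2 * x + 1 := by ring
  have hhalf : cexp (2 * π * I * (1 / 2)) = -1 := by
    rw [← exp_pi_mul_I]
    ring_nf
  have hone : cexp (2 * π * I * (0 + 1)) = 1 := by
    rw [zero_add, mul_one, exp_two_pi_mul_I]
  rw [theta11_eq_thetaChar, theta11_eq_thetaChar, add_right_comm, sub_add_eq_add_sub,
    thetaChar_add_mul_thetaChar_sub hτ, hx, thetaChar_add_one, thetaChar_add_one,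
    show (1 / 2 + 1 / 2 : ℂ) = 0 + 1 by norm_num, thetaChar_char_add_one, hhalf, hone, minor2]
  ring

/-- **Fay's trisecant identity in Mumford's three-term form** on a genus one
curve `ℂ/(ℤ + τℤ)`, where the prime form is `E(x,y) = θ₁₁(x−y)`:
`θ₁₁(b+c−t)θ₁₁(b−c)θ₁₁(d+a−t)θ₁₁(d−a) + θ₁₁(c+a−t)θ₁₁(c−a)θ₁₁(d+b−t)θ₁₁(d−b)
 + θ₁₁(a+b−t)θ₁₁(a−b)θ₁₁(d+c−t)θ₁₁(d−c) = 0`. -/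
theorem fay_trisecant_mumford (τ : ℂ) (hτ : 0 < τ.im) (a b c d t : ℂ) :
    theta11 τ (b + c - t) * theta11 τ (b - c) * theta11 τ (d + a - t) * theta11 τ (d - a)
      + theta11 τ (c + a - t) * theta11 τ (c - a) * theta11 τ (d + b - t) * theta11 τ (d - b)
      + theta11 τ (a + b - t) * theta11 τ (a - b) * theta11 τ (d + c - t) * theta11 τ (d - c)
      = 0 := by
  have shifted (u v : ℂ) : theta11 τ (u + v - t) * theta11 τ (u - v) =
      minor2 (fun u => thetaChar 0 (2 * τ) (2 * u)) (fun u => thetaChar (1 / 2) (2 * τ) (2 * u))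
        (u - t / 2) (v - t / 2) := by
    rw [← theta11_add_mul_theta11_sub hτ]
    congr 2 <;> ring
  have pluecker := minor2_pluecker (fun u => thetaChar 0 (2 * τ) (2 * u))
    (fun u => thetaChar (1 / 2) (2 * τ) (2 * u)) (a - t / 2) (b - t / 2) (c - t / 2) (d - t / 2)
  simp only [← shifted] at pluecker
  linear_combination pluecker
end
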